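/- Let A, B and C be N×T real matrices, let (α^A, γ^A) solve the h-weighted normal equations for A, and let (α^B, γ^B) solve the h-weighted normal equations for B. Define the (N+T)×(N+T) matrix 𝒞 := (NT)^{-1} times the block matrix with upper-left block diag(C 1_T), upper-right block C, lower-left block Cᵀ, and lower-right block diag(Cᵀ 1_N). Then 𝒜ᵀ H̄^{-1} 𝒞 H̄^{-1} ℬ = (NT)^{-2} · Σ_{i,t} (α^A_i + γ^A_t)·C_{it}·(α^B_i + γ^B_t). -/

import Mathlib

/-!
A solution `(α, γ)` of the normal equations may be shifted to `(α + c, γ - c)` without changing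
any `α i + γ t`, and a suitable `c` makes `∑ α = ∑ γ`. The penalty `b • v vᵀ` then annihilates
`(α, γ)`, so `H̄ (α, γ) = √(NT) • 𝒳`, i.e. `H̄⁻¹ 𝒳 = (NT)^{-1/2} • (α, γ)`. As `H̄` is symmetric,
the sandwich is `(NT)⁻¹` times the quadratic form of `𝒞 = (NT)⁻¹ • Dᵀ diag(C) D` at two such
vectors, which is the weighted sum of `(α^A_i + γ^A_t) (α^B_i + γ^B_t)`.
-/

open Matrix

/-- The penalized expected incidental-parameter Hessian
`H̄ = (NT)^{-1/2}·(M + b·v vᵀ)` with `v = (1_N', −1_T')'`. -/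
noncomputable def Hbar {N T : ℕ} (w : Fin N → Fin T → ℝ) (b : ℝ) :
    Matrix (Fin N ⊕ Fin T) (Fin N ⊕ Fin T) ℝ :=
  (Real.sqrt ((N : ℝ) * T))⁻¹ •
    (Matrix.fromBlocks (Matrix.diagonal fun i => ∑ t, w i t) (Matrix.of fun i t => w i t)
        (Matrix.of fun t i => w i t) (Matrix.diagonal fun t => ∑ i, w i t)
      + b • Matrix.vecMulVec (Sum.elim (fun _ => (1 : ℝ)) fun _ => -1)
          (Sum.elim (fun _ => (1 : ℝ)) fun _ => -1))

/-- The vector `𝒳 = (NT)^{-1}·(X 1_T ; Xᵀ 1_N)` associated to an `N×T` matrix `X`. -/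
noncomputable def scoreVec {N T : ℕ} (X : Matrix (Fin N) (Fin T) ℝ) :
    Fin N ⊕ Fin T → ℝ :=
  ((N : ℝ) * T)⁻¹ • Sum.elim (fun i => ∑ t, X i t) fun t => ∑ i, X i t

/-- The matrix `𝒞 = (NT)^{-1}·(diag(C 1_T), C; Cᵀ, diag(Cᵀ 1_N))` associated to an
`N×T` matrix `C`. -/
noncomputable def Cmat {N T : ℕ} (C : Matrix (Fin N) (Fin T) ℝ) :
    Matrix (Fin N ⊕ Fin T) (Fin N ⊕ Fin T) ℝ :=
  ((N : ℝ) * T)⁻¹ •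
    Matrix.fromBlocks (Matrix.diagonal fun i => ∑ t, C i t) C C.transpose
      (Matrix.diagonal fun t => ∑ i, C i t)

namespace TwoWayEffects

variable {ι κ : Type*} [Fintype ι] [Fintype κ]

def signVec (ι κ : Type*) : ι ⊕ κ → ℝ :=
  Sum.elim (fun _ => 1) fun _ => -1

theorem signVec_dotProduct_sumElim (α : ι → ℝ) (γ : κ → ℝ) :
    signVec ι κ ⬝ᵥ Sum.elim α γ = ∑ i, α i - ∑ t, γ t := by
  simp [signVec, dotProduct, Fintype.sum_sum_type, sub_eq_add_neg]

theorem exists_balanced_shift [Nonempty ι] (α : ι → ℝ) (γ : κ → ℝ) :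
    ∃ (α' : ι → ℝ) (γ' : κ → ℝ), (∀ i t, α' i + γ' t = α i + γ t) ∧ ∑ i, α' i = ∑ t, γ' t := by
  have hcard : (Fintype.card ι + Fintype.card κ : ℝ) ≠ 0 := by positivity
  set c := (∑ t, γ t - ∑ i, α i) / (Fintype.card ι + Fintype.card κ)
  refine ⟨fun i => α i + c, fun t => γ t - c, fun i t => by ring, ?_⟩
  simp only [Finset.sum_add_distrib, Finset.sum_sub_distrib, Finset.sum_const, Finset.card_univ,
    nsmul_eq_mul]
  have hc : (Fintype.card ι + Fintype.card κ) * c = ∑ t, γ t - ∑ i, α i :=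
    mul_div_cancel₀ _ hcard
  linear_combination hc

variable [DecidableEq ι] [DecidableEq κ]

/-- `Dᵀ diag(C) D` for the design `D` sending `(α, γ)` to `(α i + γ t)ᵢₜ`. -/
def designGram (C : Matrix ι κ ℝ) : Matrix (ι ⊕ κ) (ι ⊕ κ) ℝ :=
  fromBlocks (diagonal fun i => ∑ t, C i t) C Cᵀ (diagonal fun t => ∑ i, C i t)

theorem designGram_mulVec_sumElim (C : Matrix ι κ ℝ) (α : ι → ℝ) (γ : κ → ℝ) :
    designGram C *ᵥ Sum.elim α γ
      = Sum.elim (fun i => ∑ t, C i t * (α i + γ t)) fun t => ∑ i, C i t * (α i + γ t) := by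
  ext (i | t) <;>
    simp [designGram, mulVec, dotProduct, diagonal_apply, mul_add, Finset.sum_add_distrib,
      ← Finset.sum_mul, mul_comm]

theorem sumElim_dotProduct_designGram_mulVec (C : Matrix ι κ ℝ)
    (α α' : ι → ℝ) (γ γ' : κ → ℝ) :
    Sum.elim α γ ⬝ᵥ designGram C *ᵥ Sum.elim α' γ'
      = ∑ i, ∑ t, (α i + γ t) * C i t * (α' i + γ' t) := by
  rw [designGram_mulVec_sumElim]
  simp only [dotProduct, Fintype.sum_sum_type, Sum.elim_inl, Sum.elim_inr, Finset.mul_sum]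
  rw [Finset.sum_comm (s := Finset.univ (α := κ)), ← Finset.sum_add_distrib]
  refine Finset.sum_congr rfl fun i _ => ?_
  rw [← Finset.sum_add_distrib]
  refine Finset.sum_congr rfl fun t _ => ?_
  ring

end TwoWayEffects

open TwoWayEffects

theorem dotProduct_mulVec_mul_mul_of_isSymm {n : Type*} [Fintype n] {S : Matrix n n ℝ}
    (hS : S.IsSymm) (K : Matrix n n ℝ) (v w : n → ℝ) :
    v ⬝ᵥ (S * K * S) *ᵥ w = (S *ᵥ v) ⬝ᵥ K *ᵥ (S *ᵥ w) := by
  rw [← mulVec_mulVec, ← mulVec_mulVec, dotProduct_mulVec, ← mulVec_transpose, hS]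

section Hessian

variable {N T : ℕ}

theorem Hbar_eq_smul (w : Fin N → Fin T → ℝ) (b : ℝ) :
    Hbar w b = (√((N : ℝ) * T))⁻¹ •
      (designGram (of w) + b • vecMulVec (signVec (Fin N) (Fin T)) (signVec (Fin N) (Fin T))) :=
  rfl

theorem Cmat_eq_smul (C : Matrix (Fin N) (Fin T) ℝ) : Cmat C = ((N : ℝ) * T)⁻¹ • designGram C :=
  rfl

theorem Hbar_isSymm (w : Fin N → Fin T → ℝ) (b : ℝ) : (Hbar w b).IsSymm := by
  rw [Hbar_eq_smul]
  have hM : (designGram (of w)).IsSymm := .fromBlocks (isSymm_diagonal _) rfl (isSymm_diagonal _)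
  have hv : (vecMulVec (signVec (Fin N) (Fin T)) (signVec (Fin N) (Fin T))).IsSymm :=
    transpose_vecMulVec _ _
  exact (hM.add (hv.smul b)).smul _

theorem Hbar_mulVec_sumElim (w : Fin N → Fin T → ℝ) (b : ℝ) (X : Matrix (Fin N) (Fin T) ℝ)
    (α : Fin N → ℝ) (γ : Fin T → ℝ)
    (h1 : ∀ i, ∑ t, w i t * (α i + γ t) = ∑ t, X i t)
    (h2 : ∀ t, ∑ i, w i t * (α i + γ t) = ∑ i, X i t)
    (h0 : ∑ i, α i = ∑ t, γ t) :
    Hbar w b *ᵥ Sum.elim α γ = √((N : ℝ) * T) • scoreVec X := by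
  have hv : signVec (Fin N) (Fin T) ⬝ᵥ Sum.elim α γ = 0 := by
    rw [signVec_dotProduct_sumElim, h0, sub_self]
  rw [Hbar_eq_smul, smul_mulVec, add_mulVec, smul_mulVec, vecMulVec_mulVec, hv,
    designGram_mulVec_sumElim, scoreVec, smul_smul, ← Real.sqrt_div_self, div_eq_mul_inv]
  simp only [of_apply, h1, h2, MulOpposite.op_zero, zero_smul, smul_zero, add_zero]

theorem inv_Hbar_mulVec_scoreVec (hN : 0 < N) (hT : 0 < T) (w : Fin N → Fin T → ℝ) (b : ℝ)
    (hH : IsUnit (Hbar w b)) (X : Matrix (Fin N) (Fin T) ℝ) (α : Fin N → ℝ) (γ : Fin T → ℝ)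
    (h1 : ∀ i, ∑ t, w i t * (α i + γ t) = ∑ t, X i t)
    (h2 : ∀ t, ∑ i, w i t * (α i + γ t) = ∑ i, X i t) :
    ∃ (α' : Fin N → ℝ) (γ' : Fin T → ℝ), (∀ i t, α' i + γ' t = α i + γ t) ∧
      (Hbar w b)⁻¹ *ᵥ scoreVec X = (√((N : ℝ) * T))⁻¹ • Sum.elim α' γ' := by
  have : Nonempty (Fin N) := ⟨⟨0, hN⟩⟩
  obtain ⟨α', γ', hsum, h0⟩ := exists_balanced_shift α γ
  refine ⟨α', γ', hsum, ?_⟩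
  have hsqrt : √((N : ℝ) * T) ≠ 0 := by positivity
  have hmul := Hbar_mulVec_sumElim w b X α' γ' (by simpa only [hsum] using h1)
    (by simpa only [hsum] using h2) h0
  rw [← inv_smul_smul₀ hsqrt (scoreVec X), ← hmul, mulVec_smul, mulVec_mulVec,
    nonsing_inv_mul _ ((isUnit_iff_isUnit_det _).1 hH), one_mulVec]

end Hessian

theorem projection_formula_sandwich_general {N T : ℕ} (hN : 0 < N) (hT : 0 < T)
    (w : Fin N → Fin T → ℝ) (b : ℝ)
    (hH : IsUnit (Hbar w b))
    (A B C : Matrix (Fin N) (Fin T) ℝ)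
    (αA : Fin N → ℝ) (γA : Fin T → ℝ)
    (hA1 : ∀ i, ∑ t, w i t * (αA i + γA t) = ∑ t, A i t)
    (hA2 : ∀ t, ∑ i, w i t * (αA i + γA t) = ∑ i, A i t)
    (αB : Fin N → ℝ) (γB : Fin T → ℝ)
    (hB1 : ∀ i, ∑ t, w i t * (αB i + γB t) = ∑ t, B i t)
    (hB2 : ∀ t, ∑ i, w i t * (αB i + γB t) = ∑ i, B i t) :
    scoreVec A ⬝ᵥ ((Hbar w b)⁻¹ * Cmat C * (Hbar w b)⁻¹).mulVec (scoreVec B)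
      = (((N : ℝ) * T) ^ 2)⁻¹ *
          ∑ i, ∑ t, (αA i + γA t) * C i t * (αB i + γB t) := by
  obtain ⟨αA', γA', hA, hAvec⟩ := inv_Hbar_mulVec_scoreVec hN hT w b hH A αA γA hA1 hA2
  obtain ⟨αB', γB', hB, hBvec⟩ := inv_Hbar_mulVec_scoreVec hN hT w b hH B αB γB hB1 hB2
  rw [dotProduct_mulVec_mul_mul_of_isSymm (Hbar_isSymm w b).inv, hAvec, hBvec, Cmat_eq_smul,
    smul_mulVec, mulVec_smul, smul_dotProduct, dotProduct_smul, dotProduct_smul,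
    sumElim_dotProduct_designGram_mulVec]
  simp only [hA, hB, smul_eq_mul]
  have hNT : (0 : ℝ) ≤ N * T := by positivity
  have hsqrt : (√((N : ℝ) * T))⁻¹ * (√((N : ℝ) * T))⁻¹ = ((N : ℝ) * T)⁻¹ := by
    rw [← mul_inv, Real.mul_self_sqrt hNT]
  linear_combination (((N : ℝ) * T)⁻¹ * ∑ i, ∑ t, (αA i + γA t) * C i t * (αB i + γB t)) * hsqrt

/-- If `(α^A, γ^A)` and `(α^B, γ^B)` solve the `h`-weighted normal equations for `A` and
`B`, then `𝒜ᵀ H̄⁻¹ 𝒞 H̄⁻¹ ℬ = (NT)^{-2}·Σ_{i,t}(α^A_i + γ^A_t)·C_{it}·(α^B_i + γ^B_t)`. -/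
theorem projection_formula_sandwich {N T : ℕ} (hN : 0 < N) (hT : 0 < T)
    (w : Fin N → Fin T → ℝ) (hw : ∀ i t, 0 < w i t) (b : ℝ) (hb : 0 < b)
    (hH : IsUnit (Hbar w b))
    (A B C : Matrix (Fin N) (Fin T) ℝ)
    (αA : Fin N → ℝ) (γA : Fin T → ℝ)
    (hA1 : ∀ i, ∑ t, w i t * (αA i + γA t) = ∑ t, A i t)
    (hA2 : ∀ t, ∑ i, w i t * (αA i + γA t) = ∑ i, A i t)
    (αB : Fin N → ℝ) (γB : Fin T → ℝ)
    (hB1 : ∀ i, ∑ t, w i t * (αB i + γB t) = ∑ t, B i t)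
    (hB2 : ∀ t, ∑ i, w i t * (αB i + γB t) = ∑ i, B i t) :
    scoreVec A ⬝ᵥ ((Hbar w b)⁻¹ * Cmat C * (Hbar w b)⁻¹).mulVec (scoreVec B)
      = (((N : ℝ) * T) ^ 2)⁻¹ *
          ∑ i, ∑ t, (αA i + γA t) * C i t * (αB i + γB t) :=
  projection_formula_sandwich_general hN hT w b hH A B C αA γA hA1 hA2 αB γB hB1 hB2
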